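/- arXiv:2110.13491 — 3 statements merged into one kernel-verified Lean document; each statement's English description precedes it below -/
import Mathlib

section
/- Let d : ℝ → ℝ be a monotone increasing function with d(0) = 0, and let c₀, c₁, ..., c_m be real numbers. Define D(c) = ∫₀^c (d(c) - d(ξ)) dξ. Then ∑_{k=1}^m (d(c_k) - d(c_{k-1})) · c_k ≥ D(c_m) - D(c_0), and in particular this sum is ≥ -D(c_0). -/
/-!
Writing `D c = c * d c - ∫₀^c d`, one step of the sum compares with the increment of `D`:
`D b - D a = b * (d b - d a) - ∫ₐᵇ (d ξ - d a) dξ ≤ (d b - d a) * b`, because the last integral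
is nonnegative for monotone `d` whatever the order of `a` and `b`. Summing these telescoping
bounds gives the first claim, and `D ≥ 0` gives the second.
-/

open intervalIntegral
open MeasureTheory (volume)

theorem Monotone.sub_mul_le_intervalIntegral {f : ℝ → ℝ} (hf : Monotone f) (a b : ℝ) :
    (b - a) * f a ≤ ∫ x in a..b, f x := by
  rcases le_total a b with hab | hba
  · have h := integral_mono_on hab intervalIntegrable_const (hf.intervalIntegrable (μ := volume))
      (fun x hx => hf hx.1)
    simpa only [integral_const, smul_eq_mul] using h
  · have h := integral_mono_on hba (hf.intervalIntegrable (μ := volume)) intervalIntegrable_const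
      (fun x hx => hf hx.2)
    rw [integral_const, smul_eq_mul] at h
    rw [integral_symm]
    linarith

theorem integral_apply_sub_eq_mul_sub_integral {f : ℝ → ℝ} {c : ℝ}
    (hf : IntervalIntegrable f volume 0 c) :
    ∫ x in (0 : ℝ)..c, (f c - f x) = c * f c - ∫ x in (0 : ℝ)..c, f x := by
  rw [integral_sub intervalIntegrable_const hf, integral_const, smul_eq_mul, sub_zero]

theorem Monotone.intervalIntegral_sub_increment_le {f : ℝ → ℝ} (hf : Monotone f) (a b : ℝ) :
    (∫ x in (0 : ℝ)..b, (f b - f x)) - ∫ x in (0 : ℝ)..a, (f a - f x) ≤ (f b - f a) * b := by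
  have hint : ∀ a b : ℝ, IntervalIntegrable f volume a b := fun _ _ => hf.intervalIntegrable
  have hsplit := integral_add_adjacent_intervals (hint 0 a) (hint a b)
  have hstep := hf.sub_mul_le_intervalIntegral a b
  rw [integral_apply_sub_eq_mul_sub_integral (hint 0 a),
    integral_apply_sub_eq_mul_sub_integral (hint 0 b)]
  linarith

theorem Monotone.intervalIntegral_sub_nonneg {f : ℝ → ℝ} (hf : Monotone f) (c : ℝ) :
    0 ≤ ∫ x in (0 : ℝ)..c, (f c - f x) := by
  simpa using hf.intervalIntegral_sub_increment_le c 0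

theorem sub_le_sum_Icc_of_sub_le {α : Type*} [AddCommGroup α] [PartialOrder α]
    [IsOrderedAddMonoid α] {u v : ℕ → α} (h : ∀ k, 1 ≤ k → u k - u (k - 1) ≤ v k) (m : ℕ) :
    u m - u 0 ≤ ∑ k ∈ Finset.Icc 1 m, v k := by
  induction m with
  | zero => simp
  | succ n ih =>
    rw [Finset.sum_Icc_succ_top (by omega)]
    have hstep := h (n + 1) (by omega)
    rw [Nat.add_sub_cancel] at hstep
    calc u (n + 1) - u 0 = (u n - u 0) + (u (n + 1) - u n) := by abel
      _ ≤ _ := add_le_add ih hstep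

theorem stmt_0_general (d : ℝ → ℝ) (hd : Monotone d)
    (D : ℝ → ℝ) (hD : ∀ c : ℝ, D c = ∫ ξ in (0:ℝ)..c, (d c - d ξ))
    (m : ℕ) (c : ℕ → ℝ) :
    (∑ k ∈ Finset.Icc 1 m, (d (c k) - d (c (k - 1))) * c k) ≥ D (c m) - D (c 0) ∧
    (∑ k ∈ Finset.Icc 1 m, (d (c k) - d (c (k - 1))) * c k) ≥ -D (c 0) := by
  have hsum : D (c m) - D (c 0) ≤ ∑ k ∈ Finset.Icc 1 m, (d (c k) - d (c (k - 1))) * c k :=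
    sub_le_sum_Icc_of_sub_le (u := D ∘ c) (fun k _ => by
      simpa only [Function.comp, hD] using hd.intervalIntegral_sub_increment_le (c (k - 1)) (c k)) m
  have hpos : 0 ≤ D (c m) := (hD _).symm ▸ hd.intervalIntegral_sub_nonneg (c m)
  exact ⟨hsum, by linarith⟩

/-- Abel-type summation lower bound (Lemma 3.5 of the paper). -/
theorem stmt_0 (d : ℝ → ℝ) (hd : Monotone d) (hd0 : d 0 = 0)
    (D : ℝ → ℝ) (hD : ∀ c : ℝ, D c = ∫ ξ in (0:ℝ)..c, (d c - d ξ))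
    (m : ℕ) (c : ℕ → ℝ) :
    (∑ k ∈ Finset.Icc 1 m, (d (c k) - d (c (k - 1))) * c k) ≥ D (c m) - D (c 0) ∧
    (∑ k ∈ Finset.Icc 1 m, (d (c k) - d (c (k - 1))) * c k) ≥ -D (c 0) :=
  stmt_0_general d hd D hD m c
end

section
/- Suppose b : [0,1] → ℝ satisfies: there exist constants δ ∈ (0, 1/2), τ_w, τ_o > 0, and positive constants C₁, ..., C₆ such that C₁ S^{τ_w} ≤ b(S) ≤ C₂ S^{τ_w} for S ∈ [0, δ], C₃ ≤ b(S) ≤ C₄ for S ∈ [δ, 1-δ], and C₅ (1-S)^{τ_o} ≤ b(S) ≤ C₆ (1-S)^{τ_o} for S ∈ [1-δ, 1]. Define θ(S) = ∫₀^S b(ξ) dξ and τ = max(τ_w, τ_o). Then there exist constants C̃ > 0 and C₀ > 0 such that for all S₁, S₂ ∈ [0,1]: C̃ |S₂ - S₁|^{2+τ} ≤ (θ(S₂) - θ(S₁)) (S₂ - S₁) ≤ C₀ (S₂ - S₁)². -/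
/-!
Each zone bound dominates `K (S(1-S))^τ` from below, with `K = min C₁ C₃ C₅`, and `b` is bounded
above by `M = max C₂ C₄ C₆`. The upper estimate is then `θ S₂ - θ S₁ ≤ M (S₂ - S₁)`. For the lower
one, on the middle third of `[S₁, S₂]` the point stays at distance `≥ (S₂ - S₁)/3` from both ends
of `[0, 1]`, so there `S(1-S) ≥ (S₂ - S₁)/6`; integrating over that third alone gives
`θ S₂ - θ S₁ ≥ K/3 (1/6)^τ (S₂ - S₁)^(1+τ)`.
-/

open MeasureTheory intervalIntegral Set

lemma mul_one_sub_rpow_le_rpow {x p q : ℝ} (hx : x ∈ Icc (0 : ℝ) 1) (hp : 0 ≤ p) (hpq : p ≤ q) :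
    (x * (1 - x)) ^ q ≤ x ^ p := by
  obtain ⟨hx0, hx1⟩ := hx
  calc (x * (1 - x)) ^ q ≤ x ^ q :=
        Real.rpow_le_rpow (mul_nonneg hx0 (by linarith)) (by nlinarith) (hp.trans hpq)
    _ ≤ x ^ p := Real.rpow_le_rpow_of_exponent_ge' hx0 hx1 hp hpq

lemma mul_one_sub_rpow_le_one_sub_rpow {x p q : ℝ} (hx : x ∈ Icc (0 : ℝ) 1) (hp : 0 ≤ p)
    (hpq : p ≤ q) : (x * (1 - x)) ^ q ≤ (1 - x) ^ p := by
  have h1x : 1 - x ∈ Icc (0 : ℝ) 1 := ⟨by linarith [hx.2], by linarith [hx.1]⟩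
  simpa [mul_comm] using mul_one_sub_rpow_le_rpow h1x hp hpq

lemma mul_one_sub_ge_of_mem_middle_third {a c x : ℝ} (ha : 0 ≤ a) (hc : c ≤ 1)
    (hx : x ∈ Icc (a + (c - a) / 3) (c - (c - a) / 3)) : (c - a) / 6 ≤ x * (1 - x) := by
  obtain ⟨hxl, hxr⟩ := hx
  nlinarith

section Zones

variable {b : ℝ → ℝ} {δ τw τo : ℝ}

lemma min_mul_rpow_le_of_zone_lower_bounds {C₁ C₃ C₅ : ℝ} (hτw : 0 ≤ τw) (hτo : 0 ≤ τo)
    (hC₁ : 0 ≤ C₁) (hC₃ : 0 ≤ C₃) (hC₅ : 0 ≤ C₅)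
    (hb0 : ∀ S ∈ Icc (0 : ℝ) δ, C₁ * S ^ τw ≤ b S) (hbm : ∀ S ∈ Icc δ (1 - δ), C₃ ≤ b S)
    (hb1 : ∀ S ∈ Icc (1 - δ) 1, C₅ * (1 - S) ^ τo ≤ b S) :
    ∀ x ∈ Icc (0 : ℝ) 1, min C₁ (min C₃ C₅) * (x * (1 - x)) ^ max τw τo ≤ b x := by
  intro x hx
  have hw : 0 ≤ (x * (1 - x)) ^ max τw τo :=
    Real.rpow_nonneg (mul_nonneg hx.1 (by linarith [hx.2])) _
  rcases le_or_gt x δ with hxδ | hδx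
  · calc _ ≤ C₁ * x ^ τw := mul_le_mul (min_le_left _ _)
          (mul_one_sub_rpow_le_rpow hx hτw (le_max_left _ _)) hw hC₁
      _ ≤ b x := hb0 x ⟨hx.1, hxδ⟩
  rcases le_or_gt x (1 - δ) with hxδ' | hδx'
  · calc _ ≤ C₃ * 1 := mul_le_mul ((min_le_right _ _).trans (min_le_left _ _))
          (Real.rpow_le_one (mul_nonneg hx.1 (by linarith [hx.2])) (by nlinarith [hx.1, hx.2])
            (hτw.trans (le_max_left _ _))) hw hC₃
      _ ≤ b x := by simpa using hbm x ⟨hδx.le, hxδ'⟩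
  · calc _ ≤ C₅ * (1 - x) ^ τo := mul_le_mul ((min_le_right _ _).trans (min_le_right _ _))
          (mul_one_sub_rpow_le_one_sub_rpow hx hτo (le_max_right _ _)) hw hC₅
      _ ≤ b x := hb1 x ⟨hδx'.le, hx.2⟩

lemma le_max_of_zone_upper_bounds {C₂ C₄ C₆ : ℝ} (hτw : 0 ≤ τw) (hτo : 0 ≤ τo)
    (hC₂ : 0 ≤ C₂) (hC₆ : 0 ≤ C₆)
    (hb0 : ∀ S ∈ Icc (0 : ℝ) δ, b S ≤ C₂ * S ^ τw) (hbm : ∀ S ∈ Icc δ (1 - δ), b S ≤ C₄)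
    (hb1 : ∀ S ∈ Icc (1 - δ) 1, b S ≤ C₆ * (1 - S) ^ τo) :
    ∀ x ∈ Icc (0 : ℝ) 1, b x ≤ max C₂ (max C₄ C₆) := by
  intro x ⟨hx0, hx1⟩
  rcases le_or_gt x δ with hxδ | hδx
  · calc b x ≤ C₂ * x ^ τw := hb0 x ⟨hx0, hxδ⟩
      _ ≤ C₂ := mul_le_of_le_one_right hC₂ (Real.rpow_le_one hx0 hx1 hτw)
      _ ≤ _ := le_max_left _ _
  rcases le_or_gt x (1 - δ) with hxδ' | hδx'
  · exact (hbm x ⟨hδx.le, hxδ'⟩).trans ((le_max_left _ _).trans (le_max_right _ _))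
  · calc b x ≤ C₆ * (1 - x) ^ τo := hb1 x ⟨hδx'.le, hx1⟩
      _ ≤ C₆ := mul_le_of_le_one_right hC₆ (Real.rpow_le_one (by linarith) (by linarith) hτo)
      _ ≤ _ := (le_max_right _ _).trans (le_max_right _ _)

end Zones

section Integral

variable {f : ℝ → ℝ} {K M τ a c : ℝ}

lemma le_integral_of_le_mul_one_sub_rpow (hK : 0 ≤ K) (hτ : 0 ≤ τ) (ha : 0 ≤ a) (hac : a ≤ c)
    (hc : c ≤ 1) (hf : IntervalIntegrable f volume a c)
    (hlow : ∀ x ∈ Icc a c, K * (x * (1 - x)) ^ τ ≤ f x) :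
    K / 3 * (1 / 6) ^ τ * (c - a) ^ (1 + τ) ≤ ∫ x in a..c, f x := by
  have hau : a ≤ a + (c - a) / 3 := by linarith
  have huv : a + (c - a) / 3 ≤ c - (c - a) / 3 := by linarith
  have hvc : c - (c - a) / 3 ≤ c := by linarith
  have hmid : ∀ x ∈ Icc (a + (c - a) / 3) (c - (c - a) / 3), K * ((c - a) / 6) ^ τ ≤ f x :=
    fun x hx =>
    calc K * ((c - a) / 6) ^ τ ≤ K * (x * (1 - x)) ^ τ := mul_le_mul_of_nonneg_left
          (Real.rpow_le_rpow (by linarith) (mul_one_sub_ge_of_mem_middle_third ha hc hx) hτ) hK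
      _ ≤ f x := hlow x ⟨hau.trans hx.1, hx.2.trans hvc⟩
  have hf_nonneg : 0 ≤ᵐ[volume.restrict (Ioc a c)] f :=
    ae_restrict_of_forall_mem measurableSet_Ioc fun x hx =>
      (mul_nonneg hK (Real.rpow_nonneg (mul_nonneg (by linarith [hx.1])
        (by linarith [hx.2])) _)).trans (hlow x (Ioc_subset_Icc_self hx))
  calc K / 3 * (1 / 6) ^ τ * (c - a) ^ (1 + τ) =
        K * ((c - (c - a) / 3 - (a + (c - a) / 3)) * ((c - a) / 6) ^ τ) := by
        rw [Real.rpow_one_add' (by linarith) (by linarith), div_eq_mul_one_div (c - a) 6,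
          Real.mul_rpow (by linarith) (by norm_num)]
        ring
    _ ≤ ∫ x in (a + (c - a) / 3)..(c - (c - a) / 3), f x := by
        simpa using integral_mono_on huv intervalIntegrable_const
          (hf.mono_set (by rw [uIcc_of_le huv, uIcc_of_le hac]; exact Icc_subset_Icc hau hvc))
          hmid
    _ ≤ ∫ x in a..c, f x := integral_mono_interval hau huv hvc hf_nonneg hf

theorem integral_mul_sub_bounds_of_le_mul_one_sub_rpow (hK : 0 ≤ K) (hτ : 0 ≤ τ)
    (hf : IntervalIntegrable f volume 0 1)
    (hlow : ∀ x ∈ Icc (0 : ℝ) 1, K * (x * (1 - x)) ^ τ ≤ f x)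
    (hup : ∀ x ∈ Icc (0 : ℝ) 1, f x ≤ M) (ha : a ∈ Icc (0 : ℝ) 1) (hc : c ∈ Icc (0 : ℝ) 1) :
    K / 3 * (1 / 6) ^ τ * |c - a| ^ (2 + τ) ≤ (∫ x in a..c, f x) * (c - a) ∧
      (∫ x in a..c, f x) * (c - a) ≤ M * (c - a) ^ 2 := by
  wlog hac : a ≤ c generalizing a c
  · obtain ⟨hlow', hup'⟩ := this hc ha (le_of_not_ge hac)
    rw [integral_symm, abs_sub_comm]
    constructor <;> nlinarith
  have hfac : IntervalIntegrable f volume a c :=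
    hf.mono_set (uIcc_subset_uIcc (by rwa [uIcc_of_le zero_le_one])
      (by rwa [uIcc_of_le zero_le_one]))
  have hca : 0 ≤ c - a := by linarith
  constructor
  · have hint := le_integral_of_le_mul_one_sub_rpow hK hτ ha.1 hac hc.2 hfac
      fun x hx => hlow x ⟨ha.1.trans hx.1, hx.2.trans hc.2⟩
    rw [abs_of_nonneg hca, show 2 + τ = 1 + τ + 1 by ring,
      Real.rpow_add' hca (by linarith), Real.rpow_one, ← mul_assoc]
    exact mul_le_mul_of_nonneg_right hint hca
  · have hint : (∫ x in a..c, f x) ≤ (c - a) * M := by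
      simpa using integral_mono_on hac hfac intervalIntegrable_const
        fun x hx => hup x ⟨ha.1.trans hx.1, hx.2.trans hc.2⟩
    nlinarith

end Integral

theorem stmt_2_general (b : ℝ → ℝ) (δ τw τo C₁ C₂ C₃ C₄ C₅ C₆ : ℝ)
    (hτw : 0 < τw) (hτo : 0 < τo)
    (hC₁ : 0 < C₁) (hC₂ : 0 < C₂) (hC₃ : 0 < C₃) (hC₅ : 0 < C₅) (hC₆ : 0 < C₆)
    (hb0 : ∀ S ∈ Set.Icc (0:ℝ) δ, C₁ * S ^ τw ≤ b S ∧ b S ≤ C₂ * S ^ τw)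
    (hbm : ∀ S ∈ Set.Icc δ (1 - δ), C₃ ≤ b S ∧ b S ≤ C₄)
    (hb1 : ∀ S ∈ Set.Icc (1 - δ) 1, C₅ * (1 - S) ^ τo ≤ b S ∧ b S ≤ C₆ * (1 - S) ^ τo)
    (hbint : IntervalIntegrable b MeasureTheory.volume 0 1)
    (θ : ℝ → ℝ) (hθ : ∀ S : ℝ, θ S = ∫ ξ in (0:ℝ)..S, b ξ)
    (τ : ℝ) (hτ : τ = max τw τo) :
    ∃ Ctil C₀ : ℝ, 0 < Ctil ∧ 0 < C₀ ∧
      ∀ S₁ ∈ Set.Icc (0:ℝ) 1, ∀ S₂ ∈ Set.Icc (0:ℝ) 1,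
        Ctil * |S₂ - S₁| ^ (2 + τ) ≤ (θ S₂ - θ S₁) * (S₂ - S₁) ∧
        (θ S₂ - θ S₁) * (S₂ - S₁) ≤ C₀ * (S₂ - S₁) ^ 2 := by
  subst hτ
  have hlow := min_mul_rpow_le_of_zone_lower_bounds hτw.le hτo.le hC₁.le hC₃.le hC₅.le
    (fun S hS => (hb0 S hS).1) (fun S hS => (hbm S hS).1) (fun S hS => (hb1 S hS).1)
  have hup := le_max_of_zone_upper_bounds hτw.le hτo.le hC₂.le hC₆.le
    (fun S hS => (hb0 S hS).2) (fun S hS => (hbm S hS).2) (fun S hS => (hb1 S hS).2)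
  refine ⟨min C₁ (min C₃ C₅) / 3 * (1 / 6) ^ max τw τo, max C₂ (max C₄ C₆), by positivity,
    lt_max_of_lt_left hC₂, fun S₁ hS₁ S₂ hS₂ => ?_⟩
  have hint : ∀ S ∈ Icc (0 : ℝ) 1, IntervalIntegrable b volume 0 S := fun S hS =>
    hbint.mono_set (uIcc_subset_uIcc_left (by rwa [uIcc_of_le zero_le_one]))
  rw [hθ, hθ, integral_interval_sub_left (hint S₂ hS₂) (hint S₁ hS₁)]
  exact integral_mul_sub_bounds_of_le_mul_one_sub_rpow (by positivity) (by positivity) hbint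
    hlow hup hS₁ hS₂

/-- two-sided degenerate coercivity of the Kirchhoff transform θ
(Lemma 3.3 of the paper), under the three-zone bounds on b. -/
theorem stmt_2 (b : ℝ → ℝ) (δ τw τo C₁ C₂ C₃ C₄ C₅ C₆ : ℝ)
    (hδ : δ ∈ Set.Ioo (0:ℝ) (1/2)) (hτw : 0 < τw) (hτo : 0 < τo)
    (hC₁ : 0 < C₁) (hC₂ : 0 < C₂) (hC₃ : 0 < C₃) (hC₄ : 0 < C₄) (hC₅ : 0 < C₅) (hC₆ : 0 < C₆)
    (hb0 : ∀ S ∈ Set.Icc (0:ℝ) δ, C₁ * S ^ τw ≤ b S ∧ b S ≤ C₂ * S ^ τw)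
    (hbm : ∀ S ∈ Set.Icc δ (1 - δ), C₃ ≤ b S ∧ b S ≤ C₄)
    (hb1 : ∀ S ∈ Set.Icc (1 - δ) 1, C₅ * (1 - S) ^ τo ≤ b S ∧ b S ≤ C₆ * (1 - S) ^ τo)
    (hbint : IntervalIntegrable b MeasureTheory.volume 0 1)
    (θ : ℝ → ℝ) (hθ : ∀ S : ℝ, θ S = ∫ ξ in (0:ℝ)..S, b ξ)
    (τ : ℝ) (hτ : τ = max τw τo) :
    ∃ Ctil C₀ : ℝ, 0 < Ctil ∧ 0 < C₀ ∧
      ∀ S₁ ∈ Set.Icc (0:ℝ) 1, ∀ S₂ ∈ Set.Icc (0:ℝ) 1,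
        Ctil * |S₂ - S₁| ^ (2 + τ) ≤ (θ S₂ - θ S₁) * (S₂ - S₁) ∧
        (θ S₂ - θ S₁) * (S₂ - S₁) ≤ C₀ * (S₂ - S₁) ^ 2 :=
  stmt_2_general b δ τw τo C₁ C₂ C₃ C₄ C₅ C₆ hτw hτo hC₁ hC₂ hC₃ hC₅ hC₆ hb0 hbm hb1 hbint θ hθ τ hτ
end

section
/- Let b : [0,1] → ℝ satisfy c (1-S)^{τ_o} S^{τ_w} ≤ b(S) ≤ C₀ for all S ∈ [0,1], with constants c, C₀, τ_w, τ_o > 0. Define θ(S) = ∫₀^S b(ξ) dξ. Then for all 0 ≤ S₁ ≤ S₂ ≤ 1, there exists a constant C̃ > 0 (depending only on c, τ_w, τ_o) such that C̃ (S₂ - S₁)^{1+τ} ≤ θ(S₂) - θ(S₁) ≤ C₀ (S₂ - S₁), where τ = max(τ_w, τ_o). -/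
/-!
On the middle half `[S₁ + L/4, S₂ - L/4]` of an interval of length `L = S₂ - S₁` both `S` and
`1 - S` are at least `L/4`, and one of them is at least `1/2`, so `S (1 - S) ≥ L/8`. Since both
factors lie in `(0, 1]`, raising them to the larger exponent `τ` only decreases them, whence
`b ≥ c (L/8)^τ` there, and integrating over that half gives `θ S₂ - θ S₁ ≥ (c/2) 8^{-τ} L^{1+τ}`.
-/

open MeasureTheory intervalIntegral Set

theorem mul_rpow_le_rpow_mul_rpow_of_le_one {x y p q τ : ℝ} (hx₀ : 0 < x) (hx₁ : x ≤ 1)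
    (hy₀ : 0 < y) (hy₁ : y ≤ 1) (hp : p ≤ τ) (hq : q ≤ τ) :
    (x * y) ^ τ ≤ x ^ p * y ^ q := by
  rw [Real.mul_rpow hx₀.le hy₀.le]
  exact mul_le_mul (Real.rpow_le_rpow_of_exponent_ge hx₀ hx₁ hp)
    (Real.rpow_le_rpow_of_exponent_ge hy₀ hy₁ hq) (by positivity) (by positivity)

theorem half_le_mul_one_sub {a ξ : ℝ} (ha : 0 ≤ a) (hξ : a ≤ ξ) (hξ' : a ≤ 1 - ξ) :
    a / 2 ≤ ξ * (1 - ξ) := by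
  rcases le_total ξ (1 / 2) with h | h <;> nlinarith

theorem mul_div_eight_rpow_le_weight {c τw τo τ L ξ : ℝ} (hc : 0 ≤ c) (hτ : 0 ≤ τ)
    (hτw : τw ≤ τ) (hτo : τo ≤ τ) (hL : 0 < L) (hξ : L / 4 ≤ ξ) (hξ' : L / 4 ≤ 1 - ξ) :
    c * (L / 8) ^ τ ≤ c * (1 - ξ) ^ τo * ξ ^ τw := by
  have hprod : L / 8 ≤ (1 - ξ) * ξ := by
    have := half_le_mul_one_sub (by positivity) hξ hξ'
    linarith
  rw [mul_assoc]
  gcongr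
  exact (Real.rpow_le_rpow (by positivity) hprod hτ).trans
    (mul_rpow_le_rpow_mul_rpow_of_le_one (by linarith) (by linarith) (by linarith) (by linarith)
      hτo hτw)

theorem mul_sub_le_integral_of_le_on_subinterval {f : ℝ → ℝ} {s₁ s₂ a b m : ℝ} (h₁ : s₁ ≤ a)
    (hab : a ≤ b) (h₂ : b ≤ s₂) (hf : IntervalIntegrable f volume s₁ s₂)
    (hf₀ : ∀ x ∈ Icc s₁ s₂, 0 ≤ f x) (hm : ∀ x ∈ Icc a b, m ≤ f x) :
    m * (b - a) ≤ ∫ x in s₁..s₂, f x := by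
  have hf_ab : IntervalIntegrable f volume a b :=
    hf.mono_set (by
      rw [uIcc_of_le hab, uIcc_of_le (h₁.trans (hab.trans h₂))]; exact Icc_subset_Icc h₁ h₂)
  have hf_ae : 0 ≤ᵐ[volume.restrict (Ioc s₁ s₂)] f :=
    (ae_restrict_iff' measurableSet_Ioc).2 (.of_forall fun x hx => hf₀ x (Ioc_subset_Icc_self hx))
  calc m * (b - a) = ∫ _ in a..b, m := by
        rw [intervalIntegral.integral_const, smul_eq_mul, mul_comm]
    _ ≤ ∫ x in a..b, f x := integral_mono_on hab intervalIntegrable_const hf_ab hm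
    _ ≤ ∫ x in s₁..s₂, f x := integral_mono_interval h₁ hab h₂ hf_ae hf

theorem mul_rpow_le_integral_of_weight_le {b : ℝ → ℝ} {c τw τo τ S₁ S₂ : ℝ} (hc : 0 ≤ c)
    (hτ : 0 ≤ τ) (hτw : τw ≤ τ) (hτo : τo ≤ τ) (hS₁ : 0 ≤ S₁) (h₁₂ : S₁ ≤ S₂) (hS₂ : S₂ ≤ 1)
    (hb : ∀ S ∈ Icc S₁ S₂, c * (1 - S) ^ τo * S ^ τw ≤ b S)
    (hint : IntervalIntegrable b volume S₁ S₂) :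
    c / 2 / 8 ^ τ * (S₂ - S₁) ^ (1 + τ) ≤ ∫ S in S₁..S₂, b S := by
  rcases h₁₂.eq_or_lt with rfl | h₁₂
  · simp [Real.zero_rpow (by positivity : (1 : ℝ) + τ ≠ 0)]
  set L := S₂ - S₁
  have hL : 0 < L := sub_pos.2 h₁₂
  have hb₀ : ∀ S ∈ Icc S₁ S₂, 0 ≤ b S := fun S hS =>
    have : 0 ≤ S := hS₁.trans hS.1
    have : 0 ≤ 1 - S := by linarith [hS.2]
    (by positivity : 0 ≤ c * (1 - S) ^ τo * S ^ τw).trans (hb S hS)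
  have hmiddle : ∀ S ∈ Icc (S₁ + L / 4) (S₂ - L / 4), c * (L / 8) ^ τ ≤ b S := fun S hS =>
    (mul_div_eight_rpow_le_weight hc hτ hτw hτo hL (by linarith [hS.1])
      (by linarith [hS.2])).trans (hb S ⟨by linarith [hS.1], by linarith [hS.2]⟩)
  calc c / 2 / 8 ^ τ * L ^ (1 + τ) = c * (L / 8) ^ τ * (S₂ - L / 4 - (S₁ + L / 4)) := by
        rw [Real.rpow_add hL, Real.rpow_one, Real.div_rpow hL.le (by norm_num)]
        field_simp
        ring
    _ ≤ ∫ S in S₁..S₂, b S :=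
        mul_sub_le_integral_of_le_on_subinterval (by linarith) (by linarith) (by linarith) hint hb₀
          hmiddle

theorem stmt_3_general (b : ℝ → ℝ) (c C₀ τw τo : ℝ)
    (hc : 0 < c) (hτw : 0 < τw)
    (hb : ∀ S ∈ Set.Icc (0:ℝ) 1,
      c * (1 - S) ^ τo * S ^ τw ≤ b S ∧ b S ≤ C₀)
    (hbint : IntervalIntegrable b MeasureTheory.volume 0 1)
    (θ : ℝ → ℝ) (hθ : ∀ S : ℝ, θ S = ∫ ξ in (0:ℝ)..S, b ξ)
    (τ : ℝ) (hτ : τ = max τw τo) :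
    ∃ Ctil : ℝ, 0 < Ctil ∧
      ∀ S₁ S₂ : ℝ, 0 ≤ S₁ → S₁ ≤ S₂ → S₂ ≤ 1 →
        Ctil * (S₂ - S₁) ^ (1 + τ) ≤ θ S₂ - θ S₁ ∧
        θ S₂ - θ S₁ ≤ C₀ * (S₂ - S₁) := by
  have hτ₀ : 0 ≤ τ := hτ ▸ le_max_of_le_left hτw.le
  have hint : ∀ {u v : ℝ}, u ∈ Icc 0 1 → v ∈ Icc 0 1 → IntervalIntegrable b volume u v :=
    fun hu hv => hbint.mono_set (uIcc_subset_uIcc (by rwa [uIcc_of_le zero_le_one])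
      (by rwa [uIcc_of_le zero_le_one]))
  refine ⟨c / 2 / 8 ^ τ, by positivity, fun S₁ S₂ hS₁ h₁₂ hS₂ => ?_⟩
  have h₀ : (0 : ℝ) ∈ Icc 0 1 := left_mem_Icc.2 zero_le_one
  have hS₁' : S₁ ∈ Icc 0 1 := ⟨hS₁, h₁₂.trans hS₂⟩
  have hS₂' : S₂ ∈ Icc 0 1 := ⟨hS₁.trans h₁₂, hS₂⟩
  have hsub : Icc S₁ S₂ ⊆ Icc 0 1 := Icc_subset_Icc hS₁ hS₂
  rw [hθ, hθ, integral_interval_sub_left (hint h₀ hS₂') (hint h₀ hS₁')]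
  constructor
  · exact mul_rpow_le_integral_of_weight_le hc.le hτ₀ (hτ ▸ le_max_left _ _)
      (hτ ▸ le_max_right _ _) hS₁ h₁₂ hS₂ (fun S hS => (hb S (hsub hS)).1) (hint hS₁' hS₂')
  · calc ∫ S in S₁..S₂, b S ≤ ∫ _ in S₁..S₂, C₀ :=
          integral_mono_on h₁₂ (hint hS₁' hS₂') intervalIntegrable_const
            fun S hS => (hb S (hsub hS)).2
      _ = C₀ * (S₂ - S₁) := by rw [intervalIntegral.integral_const, smul_eq_mul, mul_comm]

/-- two-sided bound on increments of θ from pointwise bounds on b. -/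
theorem stmt_3 (b : ℝ → ℝ) (c C₀ τw τo : ℝ)
    (hc : 0 < c) (hC₀ : 0 < C₀) (hτw : 0 < τw) (hτo : 0 < τo)
    (hb : ∀ S ∈ Set.Icc (0:ℝ) 1,
      c * (1 - S) ^ τo * S ^ τw ≤ b S ∧ b S ≤ C₀)
    (hbint : IntervalIntegrable b MeasureTheory.volume 0 1)
    (θ : ℝ → ℝ) (hθ : ∀ S : ℝ, θ S = ∫ ξ in (0:ℝ)..S, b ξ)
    (τ : ℝ) (hτ : τ = max τw τo) :
    ∃ Ctil : ℝ, 0 < Ctil ∧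
      ∀ S₁ S₂ : ℝ, 0 ≤ S₁ → S₁ ≤ S₂ → S₂ ≤ 1 →
        Ctil * (S₂ - S₁) ^ (1 + τ) ≤ θ S₂ - θ S₁ ∧
        θ S₂ - θ S₁ ≤ C₀ * (S₂ - S₁) :=
  stmt_3_general b c C₀ τw τo hc hτw hb hbint θ hθ τ hτ
end
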